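/- Abstract main inequality via a near-additive decomposition: suppose ζ : V → ℝ on a real vector space V satisfies ζ(cF) = c·ζ(F) for c > 0, and suppose there exist m ∈ ℕ and constants C, k ≥ 0 such that for all F, G ∈ V: |ζ(F+G) − ζ(F) − ζ(G)| ≤ 2mC + k·Q(F,G), where Q(c F, c G) = c^N Q(F,G) for c > 0 and fixed N ≥ 2. Then |ζ(F+G) − ζ(F) − ζ(G)| ≤ C_N · Q(F,G)^{1/N} with C_N = N(N−1)^{(1−N)/N}(2mC)^{(N−1)/N} k^{1/N}, for all F, G with Q(F,G) > 0. -/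

import Mathlib

/-!
Scaling `(F, G)` by `E > 0` and dividing by `E` turns the hypothesis into
`|Π(F,G)| ≤ 2mC / E + k Q(F,G) E^(N-1)`. The right-hand side is minimised at
`E^N = 2mC / ((N-1) k Q(F,G))`, where it equals `C_N Q(F,G)^(1/N)`; the degenerate cases
`2mC = 0` or `k = 0` follow by letting `E → 0` or `E → ∞`.
-/

open Real Filter Topology

theorem div_add_mul_rpow_at_optimum {r A B : ℝ} (hr : 1 < r) (hA : 0 < A) (hB : 0 < B) :
    A / (A / ((r - 1) * B)) ^ r⁻¹ + B * ((A / ((r - 1) * B)) ^ r⁻¹) ^ (r - 1) =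
      r * (r - 1) ^ ((1 - r) / r) * A ^ ((r - 1) / r) * B ^ r⁻¹ := by
  set X := (A / ((r - 1) * B)) ^ r⁻¹
  have hr1 : 0 < r - 1 := sub_pos.mpr hr
  have hr0 : r ≠ 0 := by positivity
  have hY : 0 < A / ((r - 1) * B) := by positivity
  have hX : 0 < X := by positivity
  have hXr : X ^ r = A / ((r - 1) * B) := rpow_inv_rpow hY.le hr0
  -- at the optimum the two terms are in the ratio `r - 1 : 1`
  have hbalance : A / X = (r - 1) * (B * X ^ (r - 1)) := by
    rw [rpow_sub_one hX.ne', hXr]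
    field_simp
  have hterm : B * X ^ (r - 1) = (r - 1) ^ ((1 - r) / r) * A ^ ((r - 1) / r) * B ^ r⁻¹ := by
    rw [← rpow_mul hY.le, div_rpow hA.le (by positivity), mul_rpow hr1.le hB.le]
    have he : (1 - r) / r = -(r⁻¹ * (r - 1)) := by field_simp; ring
    have he' : (r - 1) / r = r⁻¹ * (r - 1) := by field_simp
    have hB' : B ^ r⁻¹ = B / B ^ (r⁻¹ * (r - 1)) := by
      rw [eq_div_iff (by positivity), ← rpow_add hB,
        show r⁻¹ + r⁻¹ * (r - 1) = 1 by field_simp; ring, rpow_one]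
    rw [he, he', hB', rpow_neg hr1.le]
    field_simp
  rw [hbalance, hterm]
  ring

theorem nonpos_of_forall_le_div {A P : ℝ} (h : ∀ E, 0 < E → P ≤ A / E) : P ≤ 0 :=
  ge_of_tendsto (tendsto_const_nhds.div_atTop (tendsto_id (α := ℝ)))
    ((eventually_gt_atTop 0).mono h)

theorem nonpos_of_forall_le_mul_rpow {s B P : ℝ} (hs : 0 < s)
    (h : ∀ E, 0 < E → P ≤ B * E ^ s) : P ≤ 0 := by
  have hlim : Tendsto (fun E : ℝ => B * E ^ s) (𝓝[>] 0) (𝓝 0) := by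
    simpa [zero_rpow hs.ne'] using
      (((continuous_rpow_const hs.le).tendsto 0).mono_left nhdsWithin_le_nhds).const_mul B
  exact ge_of_tendsto hlim (eventually_nhdsWithin_of_forall h)

theorem le_of_forall_le_div_add_mul_rpow {r A B P : ℝ} (hr : 1 < r) (hA : 0 ≤ A) (hB : 0 ≤ B)
    (h : ∀ E, 0 < E → P ≤ A / E + B * E ^ (r - 1)) :
    P ≤ r * (r - 1) ^ ((1 - r) / r) * A ^ ((r - 1) / r) * B ^ r⁻¹ := by
  have hr0 : 0 < r := by linarith
  rcases hA.eq_or_lt with rfl | hA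
  · have hP : P ≤ 0 := nonpos_of_forall_le_mul_rpow (sub_pos.mpr hr) (by simpa using h)
    rwa [zero_rpow (div_pos (sub_pos.mpr hr) hr0).ne', mul_zero, zero_mul]
  rcases hB.eq_or_lt with rfl | hB
  · have hP : P ≤ 0 := nonpos_of_forall_le_div (by simpa using h)
    rwa [zero_rpow (by positivity), mul_zero]
  rw [← div_add_mul_rpow_at_optimum hr hA hB]
  exact h _ (by positivity)

theorem abs_map_add_sub_sub_le_div_add_mul_rpow {V : Type*} [AddCommGroup V] [Module ℝ V]
    {N : ℕ} {A B : ℝ} {ζ : V → ℝ} {Q : V × V → ℝ}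
    (hζhom : ∀ c : ℝ, 0 < c → ∀ F : V, ζ (c • F) = c * ζ F)
    (hQhom : ∀ c : ℝ, 0 < c → ∀ F G : V, Q (c • F, c • G) = c ^ N * Q (F, G))
    (hbound : ∀ F G : V, |ζ (F + G) - ζ F - ζ G| ≤ A + B * Q (F, G))
    (F G : V) {E : ℝ} (hE : 0 < E) :
    |ζ (F + G) - ζ F - ζ G| ≤ A / E + B * Q (F, G) * E ^ ((N : ℝ) - 1) := by
  have hscaled := hbound (E • F) (E • G)
  rw [← smul_add, hζhom E hE, hζhom E hE, hζhom E hE, hQhom E hE, ← mul_sub, ← mul_sub,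
    abs_mul, abs_of_pos hE] at hscaled
  have hsplit : A / E + B * Q (F, G) * E ^ ((N : ℝ) - 1) = (A + B * (E ^ N * Q (F, G))) / E := by
    rw [rpow_sub_one hE.ne', rpow_natCast]
    ring
  rw [hsplit, le_div_iff₀ hE]
  linarith

theorem stmt16_general {V : Type*} [AddCommGroup V] [Module ℝ V]
    (N : ℕ) (hN : 2 ≤ N) (m : ℕ) (C k : ℝ) (hC : 0 ≤ C) (hk : 0 ≤ k)
    (ζ : V → ℝ) (Q : V × V → ℝ)
    (hζhom : ∀ c : ℝ, 0 < c → ∀ F : V, ζ (c • F) = c * ζ F)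
    (hQhom : ∀ c : ℝ, 0 < c → ∀ F G : V, Q (c • F, c • G) = c ^ N * Q (F, G))
    (hbound : ∀ F G : V, |ζ (F + G) - ζ F - ζ G| ≤ 2 * m * C + k * Q (F, G)) :
    ∀ F G : V, 0 < Q (F, G) →
      |ζ (F + G) - ζ F - ζ G|
        ≤ (N : ℝ) * ((N : ℝ) - 1) ^ ((1 - (N : ℝ)) / (N : ℝ))
          * (2 * m * C) ^ (((N : ℝ) - 1) / (N : ℝ)) * k ^ (1 / (N : ℝ))
          * Q (F, G) ^ (1 / (N : ℝ)) := by
  intro F G hQ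
  have hN1 : (1 : ℝ) < N := by exact_mod_cast hN
  have hopt := le_of_forall_le_div_add_mul_rpow hN1 (by positivity) (by positivity)
    fun E hE => abs_map_add_sub_sub_le_div_add_mul_rpow hζhom hQhom hbound F G hE
  rwa [mul_rpow hk hQ.le, ← mul_assoc, ← one_div] at hopt

/-- Abstract main inequality: if ζ is positively 1-homogeneous, Q is positively
N-homogeneous, and |ζ(F+G) - ζ(F) - ζ(G)| ≤ 2mC + k Q(F,G), then
|ζ(F+G) - ζ(F) - ζ(G)| ≤ C_N Q(F,G)^{1/N} with
C_N = N (N-1)^{(1-N)/N} (2mC)^{(N-1)/N} k^{1/N}. -/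
theorem stmt16 {V : Type*} [AddCommGroup V] [Module ℝ V]
    (N : ℕ) (hN : 2 ≤ N) (m : ℕ) (C k : ℝ) (hC : 0 ≤ C) (hk : 0 ≤ k)
    (ζ : V → ℝ) (Q : V × V → ℝ)
    (hζhom : ∀ c : ℝ, 0 < c → ∀ F : V, ζ (c • F) = c * ζ F)
    (hQ0 : ∀ p : V × V, 0 ≤ Q p)
    (hQhom : ∀ c : ℝ, 0 < c → ∀ F G : V, Q (c • F, c • G) = c ^ N * Q (F, G))
    (hbound : ∀ F G : V, |ζ (F + G) - ζ F - ζ G| ≤ 2 * m * C + k * Q (F, G)) :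
    ∀ F G : V, 0 < Q (F, G) →
      |ζ (F + G) - ζ F - ζ G|
        ≤ (N : ℝ) * ((N : ℝ) - 1) ^ ((1 - (N : ℝ)) / (N : ℝ))
          * (2 * m * C) ^ (((N : ℝ) - 1) / (N : ℝ)) * k ^ (1 / (N : ℝ))
          * Q (F, G) ^ (1 / (N : ℝ)) :=
  stmt16_general N hN m C k hC hk ζ Q hζhom hQhom hbound
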